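/- arXiv:2011.07752 — 2 statements merged into one kernel-verified Lean document; each statement's English description precedes it below -/
import Mathlib

section
/- Consider a finite directed graph on node set N = {s} ∪ V ∪ A ∪ {t}, where A consists of pairs of auxiliary nodes (a_e, b_e) indexed by a finite collection 𝓔 of hyperedges e ⊆ V: for each e the graph has edges (v, a_e) and (b_e, v) with positive weights for every v ∈ e, and an edge (a_e, b_e) with positive weight; in addition, for a fixed seed set R ⊆ V and degrees d_i > 0 (i ∈ V) and γ > 0, there is an edge (s, r) of weight γ d_r for each r ∈ R and an edge (v, t) of weight γ d_v for each v ∈ V∖R; there are no other edges. Fix κ > 0 and 1 < p ≤ 2, let ℓ(t) = t^p/p, and consider minimizing F(x) = Σ_{(i,j) edge} w_{ij} ℓ((x_i − x_j)₊) + κγ Σ_{i∈V} d_i x_i over all x : N → ℝ with x_s = 1, x_t = 0 and x ≥ 0, where (t)₊ = max{t,0}. For any node u ≠ s,t define g_u(x) = (1/γ)[ Σ_{(j,u) edge} w_{ju}((x_j − x_u)₊)^{p−1} − Σ_{(u,j) edge} w_{uj}((x_u − x_j)₊)^{p−1} ]. Then a feasible point x* is a global minimizer of F if and only if: (i) g_i(x*)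 ≤ κ d_i for every i ∈ V; (ii) (κ d_i − g_i(x*)) x*_i = 0 for every i ∈ V; and (iii) g_u(x*) = 0 for every auxiliary node u ∈ A. -/
open Finset

/-- Nodes of the localized directed cut graph: source `s`, sink `t`, original vertices,
and the two auxiliary nodes `a_e`, `b_e` of each hyperedge gadget. -/
abbrev LNode (V E : Type) : Type := Unit ⊕ Unit ⊕ V ⊕ E ⊕ E

namespace LNode

def s {V E : Type} : LNode V E := Sum.inl ()
def t {V E : Type} : LNode V E := Sum.inr (Sum.inl ())
def orig {V E : Type} (v : V) : LNode V E := Sum.inr (Sum.inr (Sum.inl v))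
def auxA {V E : Type} (ε : E) : LNode V E := Sum.inr (Sum.inr (Sum.inr (Sum.inl ε)))
def auxB {V E : Type} (ε : E) : LNode V E := Sum.inr (Sum.inr (Sum.inr (Sum.inr ε)))

end LNode

open scoped Classical in
/-- Edge weights of the localized directed cut graph: `(s,r)` with weight `γ d_r` for
`r ∈ R`, `(v,t)` with weight `γ d_v` for `v ∉ R`, `(v, a_ε)` and `(b_ε, v)` for `v ∈ ε`,
`(a_ε, b_ε)`, and no other edges (weight `0`). -/
noncomputable def lhWeight {V E : Type} (e : E → Finset V)
    (wva : V → E → ℝ) (wbv : E → V → ℝ) (wab : E → ℝ)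
    (R : Finset V) (d : V → ℝ) (γ : ℝ) : LNode V E → LNode V E → ℝ
  | Sum.inl _, Sum.inr (Sum.inr (Sum.inl v)) => if v ∈ R then γ * d v else 0
  | Sum.inr (Sum.inr (Sum.inl v)), Sum.inr (Sum.inl _) => if v ∈ R then 0 else γ * d v
  | Sum.inr (Sum.inr (Sum.inl v)), Sum.inr (Sum.inr (Sum.inr (Sum.inl ε))) =>
      if v ∈ e ε then wva v ε else 0
  | Sum.inr (Sum.inr (Sum.inr (Sum.inr ε))), Sum.inr (Sum.inr (Sum.inl v)) =>
      if v ∈ e ε then wbv ε v else 0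
  | Sum.inr (Sum.inr (Sum.inr (Sum.inl ε))), Sum.inr (Sum.inr (Sum.inr (Sum.inr ε'))) =>
      if ε = ε' then wab ε else 0
  | _, _ => 0

/-- The p-norm diffusion objective
`F(x) = Σ_{(i,j)} w_{ij} ℓ((x_i − x_j)₊) + κγ Σ_{i∈V} d_i x_i` with `ℓ(t) = t^p/p`. -/
noncomputable def lhFp {V E : Type} [Fintype V] [Fintype E]
    (w : LNode V E → LNode V E → ℝ) (d : V → ℝ) (κ γ p : ℝ) (x : LNode V E → ℝ) : ℝ :=
  ∑ i : LNode V E, ∑ j : LNode V E, w i j * ((max (x i - x j) 0) ^ p / p)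
    + κ * γ * ∑ v : V, d v * x (LNode.orig v)

/-- The p-norm residual `g_u(x)` of a node `u`. -/
noncomputable def lhResp {V E : Type} [Fintype V] [Fintype E]
    (w : LNode V E → LNode V E → ℝ) (γ p : ℝ) (x : LNode V E → ℝ) (u : LNode V E) : ℝ :=
  (1 / γ) * (∑ j : LNode V E, w j u * (max (x j - x u) 0) ^ (p - 1)
    - ∑ j : LNode V E, w u j * (max (x u - x j) 0) ^ (p - 1))

/-
The objective is convex, and its first-order condition can be read off the graph. For
`ℓ(t) = (t₊)^p / p` one has `ℓ(b) ≥ ℓ(a) + (a₊)^(p-1) (b - a)` (Young's inequality with the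
conjugate exponents `p / (p - 1)` and `p`); summing over the edges gives
`F y ≥ F x + ⟨∇F x, y - x⟩` with `(∇F x)_u = c_u - γ g_u(x)`, where `c` is the linear cost.
Hence `x` minimizes `F` on `{y ≥ 0, y_s = 1, y_t = 0}` iff at every free node
`(∇F x)_u ≥ 0` and `(∇F x)_u x_u = 0`: sufficiency is the inequality itself, and necessity
follows by applying it at `x + δ e_u` and letting `δ → 0±`, using that `∇F` is continuous
for `p > 1`. On original nodes these are (i) and (ii). On auxiliary nodes `c_u = 0`, and if
`x_u = 0` then `g_u(x)` is a pure inflow, hence `≥ 0`; so the two conditions become `g_u = 0`.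
-/

noncomputable def pLoss (p t : ℝ) : ℝ := max t 0 ^ p / p
noncomputable def pLossDeriv (p t : ℝ) : ℝ := max t 0 ^ (p - 1)

lemma pLossDeriv_nonneg (p t : ℝ) : 0 ≤ pLossDeriv p t := Real.rpow_nonneg (le_max_right _ _) _

lemma pLossDeriv_of_nonpos {p t : ℝ} (hp : 1 < p) (ht : t ≤ 0) : pLossDeriv p t = 0 := by
  rw [pLossDeriv, max_eq_right ht, Real.zero_rpow (by linarith)]

@[fun_prop]
lemma continuous_pLossDeriv {p : ℝ} (hp : 1 < p) : Continuous (pLossDeriv p) :=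
  (continuous_id.max continuous_const).rpow_const fun _ => Or.inr (by linarith)

lemma pLoss_add_pLossDeriv_mul_sub_le {p : ℝ} (hp : 1 < p) (a b : ℝ) :
    pLoss p a + pLossDeriv p a * (b - a) ≤ pLoss p b := by
  have hp0 : 0 < p := by linarith
  rcases le_or_gt a 0 with ha | ha
  · rw [pLossDeriv_of_nonpos hp ha, pLoss, max_eq_right ha, Real.zero_rpow hp0.ne', zero_div,
      zero_mul, add_zero]
    exact div_nonneg (Real.rpow_nonneg (le_max_right _ _) _) hp0.le
  set bp := max b 0
  have hpow : a ^ (p - 1) * a = a ^ p := by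
    rw [← Real.rpow_add_one ha.ne', sub_add_cancel]
  have young := Real.young_inequality_of_nonneg (Real.rpow_nonneg ha.le (p - 1))
    (le_max_right b 0) (Real.HolderConjugate.conjExponent hp).symm
  rw [← Real.rpow_mul ha.le, Real.conjExponent, mul_div_cancel₀ _ (by linarith : p - 1 ≠ 0)]
    at young
  calc pLoss p a + pLossDeriv p a * (b - a)
      ≤ a ^ p / p + a ^ (p - 1) * (bp - a) := by
        rw [pLoss, pLossDeriv, max_eq_left ha.le]
        gcongr
        exact le_max_left b 0
    _ = a ^ (p - 1) * bp - a ^ p / (p / (p - 1)) := by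
        rw [mul_sub, hpow]; field_simp; ring
    _ ≤ bp ^ p / p := by linarith

lemma nonneg_and_mul_eq_zero_of_forall_mul_nonneg {G : ℝ → ℝ} (hG : ContinuousAt G 0) {a : ℝ}
    (ha : 0 ≤ a) (h : ∀ δ, -a ≤ δ → 0 ≤ δ * G δ) : 0 ≤ G 0 ∧ G 0 * a = 0 := by
  have hright : 0 ≤ G 0 := by
    refine ge_of_tendsto (hG.tendsto.mono_left (nhdsWithin_le_nhds (s := Set.Ioi 0))) ?_
    filter_upwards [self_mem_nhdsWithin] with δ (hδ : 0 < δ)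
    exact (mul_nonneg_iff_of_pos_left hδ).mp (h δ (by linarith))
  refine ⟨hright, ?_⟩
  rcases ha.eq_or_lt with rfl | ha
  · exact mul_zero _
  have hleft : G 0 ≤ 0 := by
    refine le_of_tendsto (hG.tendsto.mono_left (nhdsWithin_le_nhds (s := Set.Iio 0))) ?_
    filter_upwards [Ioo_mem_nhdsLT (by linarith : -a < 0)] with δ hδ
    exact nonpos_of_mul_nonneg_right (h δ hδ.1.le) hδ.2
  rw [le_antisymm hleft hright, zero_mul]

lemma sum_netFlow_mul {N : Type} [Fintype N] (f : N → N → ℝ) (z : N → ℝ) :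
    ∑ u, (∑ j, f u j - ∑ j, f j u) * z u = ∑ i, ∑ j, f i j * (z i - z j) := by
  simp only [sub_mul, mul_sub, sum_sub_distrib, sum_mul]
  rw [sum_comm (f := fun i j => f j i * z i)]

section FlowObjective

variable {N : Type} [Fintype N] (w : N → N → ℝ) (c : N → ℝ)

noncomputable def flowObjective (p : ℝ) (x : N → ℝ) : ℝ :=
  ∑ i, ∑ j, w i j * pLoss p (x i - x j) + ∑ i, c i * x i

noncomputable def flowGrad (p : ℝ) (x : N → ℝ) (u : N) : ℝ :=
  ∑ j, w u j * pLossDeriv p (x u - x j) - ∑ j, w j u * pLossDeriv p (x j - x u) + c u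

variable {p : ℝ}

lemma flowObjective_add_sum_flowGrad_mul_le (hp : 1 < p) (hw : ∀ i j, 0 ≤ w i j)
    (x y : N → ℝ) :
    flowObjective w c p x + ∑ u, flowGrad w c p x u * (y u - x u) ≤ flowObjective w c p y := by
  have hlin : ∑ u, flowGrad w c p x u * (y u - x u)
      = ∑ i, ∑ j, w i j * pLossDeriv p (x i - x j) * ((y i - x i) - (y j - x j))
        + ∑ i, c i * (y i - x i) := by
    simp only [flowGrad, add_mul, sum_add_distrib]
    rw [sum_netFlow_mul (fun i j => w i j * pLossDeriv p (x i - x j))]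
  have hloss : ∀ i j, w i j * pLoss p (x i - x j)
      + w i j * pLossDeriv p (x i - x j) * ((y i - x i) - (y j - x j))
        ≤ w i j * pLoss p (y i - y j) := fun i j => by
    rw [mul_assoc, ← mul_add, show (y i - x i) - (y j - x j) = (y i - y j) - (x i - x j) by ring]
    exact mul_le_mul_of_nonneg_left (pLoss_add_pLossDeriv_mul_sub_le hp _ _) (hw i j)
  have := sum_le_sum fun i (_ : i ∈ univ) => sum_le_sum fun j (_ : j ∈ univ) => hloss i j
  simp only [sum_add_distrib] at this
  have hcost : ∑ i, c i * (y i - x i) = ∑ i, c i * y i - ∑ i, c i * x i := by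
    simp only [mul_sub, sum_sub_distrib]
  rw [flowObjective, flowObjective, hlin, hcost]
  linarith

lemma continuous_flowGrad (hp : 1 < p) (u : N) :
    Continuous fun x => flowGrad w c p x u := by
  unfold flowGrad
  fun_prop (disch := exact hp)

lemma flowGrad_le_of_eq_zero (hp : 1 < p) (hw : ∀ i j, 0 ≤ w i j) {x : N → ℝ}
    (hx : 0 ≤ x) {u : N} (hu : x u = 0) : flowGrad w c p x u ≤ c u := by
  have hout : ∑ j, w u j * pLossDeriv p (x u - x j) = 0 :=
    sum_eq_zero fun j _ => by
      rw [pLossDeriv_of_nonpos hp (by linarith [show 0 ≤ x j from hx j]), mul_zero]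
  have hin : 0 ≤ ∑ j, w j u * pLossDeriv p (x j - x u) :=
    sum_nonneg fun j _ => mul_nonneg (hw j u) (pLossDeriv_nonneg p _)
  rw [flowGrad, hout]
  linarith

lemma mul_flowGrad_update_nonneg [DecidableEq N] (hp : 1 < p) (hw : ∀ i j, 0 ≤ w i j)
    {S : Set N} {x : N → ℝ} (hx : 0 ≤ x)
    (hmin : IsMinOn (flowObjective w c p) {y | 0 ≤ y ∧ ∀ v ∈ S, y v = x v} x)
    {u : N} (hu : u ∉ S) {δ : ℝ} (hδ : -x u ≤ δ) :
    0 ≤ δ * flowGrad w c p (Function.update x u (x u + δ)) u := by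
  set y := Function.update x u (x u + δ)
  have hy : y ∈ {y | 0 ≤ y ∧ ∀ v ∈ S, y v = x v} := by
    refine ⟨fun v => show (0 : ℝ) ≤ y v from ?_,
      fun v hv => Function.update_of_ne (by rintro rfl; exact hu hv) _ _⟩
    rcases eq_or_ne v u with rfl | hvu
    · simp only [y, Function.update_self]; linarith
    · simp only [y, Function.update_of_ne hvu]; exact hx v
  have hsum : ∑ v, flowGrad w c p y v * (x v - y v) = -(δ * flowGrad w c p y u) := by
    rw [sum_eq_single u (fun v _ hvu => by simp [y, Function.update_of_ne hvu]) (by simp)]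
    simp only [y, Function.update_self]
    ring
  linarith [isMinOn_iff.mp hmin y hy, flowObjective_add_sum_flowGrad_mul_le w c hp hw y x]

theorem isMinOn_flowObjective_iff (hp : 1 < p) (hw : ∀ i j, 0 ≤ w i j) (S : Set N)
    {x : N → ℝ} (hx : 0 ≤ x) :
    IsMinOn (flowObjective w c p) {y | 0 ≤ y ∧ ∀ v ∈ S, y v = x v} x ↔
      ∀ u ∉ S, 0 ≤ flowGrad w c p x u ∧ flowGrad w c p x u * x u = 0 := by
  classical
  refine ⟨fun hmin u hu => ?_, fun hkkt => isMinOn_iff.mpr ?_⟩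
  · have hcont : ContinuousAt (fun δ => flowGrad w c p (Function.update x u (x u + δ)) u) 0 :=
      ((continuous_flowGrad w c hp u).comp (by fun_prop)).continuousAt
    simpa using nonneg_and_mul_eq_zero_of_forall_mul_nonneg hcont (hx u)
      fun δ hδ => mul_flowGrad_update_nonneg w c hp hw hx hmin hu hδ
  · rintro y ⟨hy, hyS⟩
    have hterm : ∀ u, 0 ≤ flowGrad w c p x u * (y u - x u) := fun u => by
      by_cases hu : u ∈ S
      · rw [hyS u hu, sub_self, mul_zero]
      · obtain ⟨hnonneg, hcompl⟩ := hkkt u hu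
        rw [mul_sub, hcompl, sub_zero]
        exact mul_nonneg hnonneg (hy u)
    linarith [sum_nonneg fun u (_ : u ∈ univ) => hterm u,
      flowObjective_add_sum_flowGrad_mul_le w c hp hw x y]

lemma flowGrad_eq_zero_iff_of_eq_zero (hp : 1 < p) (hw : ∀ i j, 0 ≤ w i j) {x : N → ℝ}
    (hx : 0 ≤ x) {u : N} (hcu : c u = 0) :
    (0 ≤ flowGrad w c p x u ∧ flowGrad w c p x u * x u = 0) ↔ flowGrad w c p x u = 0 := by
  refine ⟨fun ⟨hnonneg, hcompl⟩ => ?_, fun h => by simp [h]⟩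
  rcases mul_eq_zero.mp hcompl with h | h
  · exact h
  · exact le_antisymm (hcu ▸ flowGrad_le_of_eq_zero w c hp hw hx h) hnonneg

end FlowObjective

namespace LNode

variable {V E : Type}

lemma forall_notMem_s_t_iff {P : LNode V E → Prop} :
    (∀ u ∉ ({s, t} : Set (LNode V E)), P u) ↔
      (∀ v, P (orig v)) ∧ (∀ ε, P (auxA ε)) ∧ ∀ ε, P (auxB ε) := by
  refine ⟨fun h => ⟨fun v => h _ ?_, fun ε => h _ ?_, fun ε => h _ ?_⟩, ?_⟩
  · simp [s, t, orig]
  · simp [s, t, auxA]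
  · simp [s, t, auxB]
  · rintro ⟨hV, hA, hB⟩ (_ | _ | v | ε | ε) hu
    · exact absurd (Set.mem_insert _ _) hu
    · exact absurd (Set.mem_insert_of_mem _ rfl) hu
    exacts [hV v, hA ε, hB ε]

end LNode

lemma lhWeight_nonneg {V E : Type} {e : E → Finset V} {wva : V → E → ℝ} {wbv : E → V → ℝ}
    {wab : E → ℝ} {R : Finset V} {d : V → ℝ} {γ : ℝ}
    (hwva : ∀ ε, ∀ v ∈ e ε, 0 ≤ wva v ε) (hwbv : ∀ ε, ∀ v ∈ e ε, 0 ≤ wbv ε v)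
    (hwab : ∀ ε, 0 ≤ wab ε) (hd : ∀ v, 0 ≤ d v) (hγ : 0 ≤ γ) (i j : LNode V E) :
    0 ≤ lhWeight e wva wbv wab R d γ i j := by
  rcases i with _ | _ | _ | _ | _ <;> rcases j with _ | _ | _ | _ | _ <;>
    simp only [lhWeight] <;> (try split_ifs) <;> first
      | exact le_rfl
      | exact mul_nonneg hγ (hd _)
      | exact hwva _ _ ‹_›
      | exact hwbv _ _ ‹_›
      | exact hwab _

def lhCost {V E : Type} (d : V → ℝ) (κ γ : ℝ) : LNode V E → ℝ :=
  Sum.elim 0 (Sum.elim 0 (Sum.elim (fun v => κ * γ * d v) 0))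

section LocalizedCutGraph

variable {V E : Type} [Fintype V] [Fintype E]

lemma lhFp_eq_flowObjective (w : LNode V E → LNode V E → ℝ) (d : V → ℝ) (κ γ p : ℝ) :
    lhFp w d κ γ p = flowObjective w (lhCost d κ γ) p := by
  ext x
  simp [lhFp, flowObjective, pLoss, lhCost, Fintype.sum_sum_type, mul_sum, LNode.orig,
    mul_assoc]

lemma flowGrad_lhCost (w : LNode V E → LNode V E → ℝ) (d : V → ℝ) (κ : ℝ) {γ : ℝ}
    (hγ : γ ≠ 0) (p : ℝ) (x : LNode V E → ℝ) (u : LNode V E) :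
    flowGrad w (lhCost d κ γ) p x u = lhCost d κ γ u - γ * lhResp w γ p x u := by
  simp only [flowGrad, lhResp, pLossDeriv]
  field_simp
  ring

lemma forall_feasible_lhFp_le_iff_isMinOn (w : LNode V E → LNode V E → ℝ) (d : V → ℝ)
    (κ γ p : ℝ) {x : LNode V E → ℝ} (hxs : x LNode.s = 1) (hxt : x LNode.t = 0) :
    (∀ y : LNode V E → ℝ, y LNode.s = 1 → y LNode.t = 0 → (∀ u, 0 ≤ y u) →
        lhFp w d κ γ p x ≤ lhFp w d κ γ p y) ↔
      IsMinOn (flowObjective w (lhCost d κ γ) p)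
        {y | 0 ≤ y ∧ ∀ u ∈ ({LNode.s, LNode.t} : Set (LNode V E)), y u = x u} x := by
  rw [isMinOn_iff, lhFp_eq_flowObjective]
  refine forall_congr' fun y => ?_
  simp only [Set.mem_ofPred_eq, Set.mem_insert_iff, Set.mem_singleton_iff, forall_eq_or_imp,
    forall_eq, hxs, hxt, Pi.le_def, Pi.zero_apply]
  tauto

lemma flowGrad_lhCost_orig_kkt_iff (w : LNode V E → LNode V E → ℝ) (d : V → ℝ) (κ : ℝ)
    {γ : ℝ} (hγ : 0 < γ) (p : ℝ) (x : LNode V E → ℝ) (v : V) :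
    (0 ≤ flowGrad w (lhCost d κ γ) p x (LNode.orig v) ∧
        flowGrad w (lhCost d κ γ) p x (LNode.orig v) * x (LNode.orig v) = 0) ↔
      lhResp w γ p x (LNode.orig v) ≤ κ * d v ∧
        (κ * d v - lhResp w γ p x (LNode.orig v)) * x (LNode.orig v) = 0 := by
  rw [flowGrad_lhCost w d κ hγ.ne',
    show lhCost d κ γ (LNode.orig v) = γ * (κ * d v) by simp [lhCost, LNode.orig]; ring,
    ← mul_sub, mul_nonneg_iff_of_pos_left hγ, sub_nonneg, mul_assoc, mul_eq_zero,
    or_iff_right hγ.ne']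

lemma flowGrad_lhCost_eq_zero_iff (w : LNode V E → LNode V E → ℝ) {d : V → ℝ} {κ γ : ℝ}
    (hγ : γ ≠ 0) (p : ℝ) (x : LNode V E → ℝ) {u : LNode V E} (hu : lhCost d κ γ u = 0) :
    flowGrad w (lhCost d κ γ) p x u = 0 ↔ lhResp w γ p x u = 0 := by
  rw [flowGrad_lhCost w d κ hγ, hu, zero_sub, neg_eq_zero, mul_eq_zero, or_iff_right hγ]

end LocalizedCutGraph

theorem lh_pnorm_kkt_general {V E : Type} [Fintype V] [Fintype E]
    (e : E → Finset V) (wva : V → E → ℝ) (wbv : E → V → ℝ) (wab : E → ℝ)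
    (R : Finset V) (d : V → ℝ) (γ κ p : ℝ)
    (hwva : ∀ ε, ∀ v ∈ e ε, 0 < wva v ε) (hwbv : ∀ ε, ∀ v ∈ e ε, 0 < wbv ε v)
    (hwab : ∀ ε, 0 < wab ε) (hd : ∀ v, 0 < d v) (hγ : 0 < γ)
    (hp1 : 1 < p)
    (x : LNode V E → ℝ)
    (hxs : x LNode.s = 1) (hxt : x LNode.t = 0) (hx0 : ∀ u, 0 ≤ x u) :
    (∀ y : LNode V E → ℝ, y LNode.s = 1 → y LNode.t = 0 → (∀ u, 0 ≤ y u) →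
        lhFp (lhWeight e wva wbv wab R d γ) d κ γ p x ≤
          lhFp (lhWeight e wva wbv wab R d γ) d κ γ p y) ↔
      ((∀ v : V, lhResp (lhWeight e wva wbv wab R d γ) γ p x (LNode.orig v) ≤ κ * d v) ∧
        (∀ v : V,
          (κ * d v - lhResp (lhWeight e wva wbv wab R d γ) γ p x (LNode.orig v)) *
            x (LNode.orig v) = 0) ∧
        (∀ ε : E, lhResp (lhWeight e wva wbv wab R d γ) γ p x (LNode.auxA ε) = 0 ∧
          lhResp (lhWeight e wva wbv wab R d γ) γ p x (LNode.auxB ε) = 0)) := by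
  set w := lhWeight e wva wbv wab R d γ
  have hw : ∀ i j, 0 ≤ w i j := lhWeight_nonneg (fun ε v hv => (hwva ε v hv).le)
    (fun ε v hv => (hwbv ε v hv).le) (fun ε => (hwab ε).le) (fun v => (hd v).le) hγ.le
  have haux : ∀ u, lhCost d κ γ u = 0 → ((0 ≤ flowGrad w (lhCost d κ γ) p x u ∧
      flowGrad w (lhCost d κ γ) p x u * x u = 0) ↔ lhResp w γ p x u = 0) := fun u hu => by
    rw [flowGrad_eq_zero_iff_of_eq_zero _ _ hp1 hw hx0 hu,
      flowGrad_lhCost_eq_zero_iff w hγ.ne' p x hu]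
  rw [forall_feasible_lhFp_le_iff_isMinOn w d κ γ p hxs hxt,
    isMinOn_flowObjective_iff _ _ hp1 hw _ hx0, LNode.forall_notMem_s_t_iff]
  simp only [flowGrad_lhCost_orig_kkt_iff w d κ hγ p x, haux (LNode.auxA _) rfl,
    haux (LNode.auxB _) rfl, forall_and, and_assoc]

/-- KKT characterization of global minimizers of the p-norm localized hypergraph
diffusion objective (`1 < p ≤ 2`) on the localized directed cut graph: a feasible `x*`
(`x*_s = 1`, `x*_t = 0`, `x* ≥ 0`) is a global minimizer iff (i) `g_i ≤ κ d_i` on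
original nodes, (ii) `(κ d_i − g_i) x*_i = 0` on original nodes, and (iii) `g_u = 0`
on all auxiliary nodes. -/
theorem lh_pnorm_kkt {V E : Type} [Fintype V] [Fintype E] [DecidableEq V] [DecidableEq E]
    (e : E → Finset V) (wva : V → E → ℝ) (wbv : E → V → ℝ) (wab : E → ℝ)
    (R : Finset V) (d : V → ℝ) (γ κ p : ℝ)
    (hwva : ∀ ε, ∀ v ∈ e ε, 0 < wva v ε) (hwbv : ∀ ε, ∀ v ∈ e ε, 0 < wbv ε v)
    (hwab : ∀ ε, 0 < wab ε) (hd : ∀ v, 0 < d v) (hγ : 0 < γ) (hκ : 0 < κ)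
    (hp1 : 1 < p) (hp2 : p ≤ 2)
    (x : LNode V E → ℝ)
    (hxs : x LNode.s = 1) (hxt : x LNode.t = 0) (hx0 : ∀ u, 0 ≤ x u) :
    (∀ y : LNode V E → ℝ, y LNode.s = 1 → y LNode.t = 0 → (∀ u, 0 ≤ y u) →
        lhFp (lhWeight e wva wbv wab R d γ) d κ γ p x ≤
          lhFp (lhWeight e wva wbv wab R d γ) d κ γ p y) ↔
      ((∀ v : V, lhResp (lhWeight e wva wbv wab R d γ) γ p x (LNode.orig v) ≤ κ * d v) ∧
        (∀ v : V,
          (κ * d v - lhResp (lhWeight e wva wbv wab R d γ) γ p x (LNode.orig v)) *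
            x (LNode.orig v) = 0) ∧
        (∀ ε : E, lhResp (lhWeight e wva wbv wab R d γ) γ p x (LNode.auxA ε) = 0 ∧
          lhResp (lhWeight e wva wbv wab R d γ) γ p x (LNode.auxB ε) = 0)) :=
  lh_pnorm_kkt_general e wva wbv wab R d γ κ p hwva hwbv hwab hd hγ hp1 x hxs hxt hx0
end

section
/- Let H = (V,𝓔) be a hypergraph as above and let x ∈ ℝ^V have nonnegative entries. For each hyperedge e let (a_e*, b_e*) be a minimizer of the inner problem defining Q_e(x), and define L_e(x) ∈ ℝ^V by L_e(x)_v = (x_v − a_e*)₊ − (b_e* − x_v)₊ for v ∈ e and L_e(x)_v = 0 otherwise. Then for every sweep set S_j^x with 0 < vol(S_j^x) < M, setting σ_j = ( 1 + 2 max_{e∈∂S_j^x} min{δ_e, |e|/2} )^{-1} (and σ_j = 1 if ∂S_j^x = ∅), the quantities vol(S_j^x) ± σ_j cut_H(S_j^x) lie in [0, M] and 2 I_x(vol(S_j^x)) − Σ_{e∈𝓔} Σ_{v∈S_j^x} L_e(x)_v ≤ I_x( vol(S_j^x) − σ_j cut_H(S_j^x) ) + I_x( vol(S_j^x) + σ_j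 cut_H(S_j^x) ). -/
open Finset

noncomputable section

/-- δ-linear splitting penalty of the set `S` within hyperedge `ε`:
`f_ε(e_ε ∩ S) = min {|e_ε ∩ S|, |e_ε ∖ S|, δ_ε}`. -/
def hsplit {V E : Type*} [DecidableEq V] (e : E → Finset V) (δe : E → ℝ)
    (ε : E) (S : Finset V) : ℝ :=
  min (min ((e ε ∩ S).card : ℝ) ((e ε \ S).card : ℝ)) (δe ε)

/-- Hypergraph cut `cut_H(S) = Σ_ε f_ε(e_ε ∩ S)`. -/
def hcut {V E : Type*} [Fintype E] [DecidableEq V] (e : E → Finset V) (δe : E → ℝ)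
    (S : Finset V) : ℝ :=
  ∑ ε : E, hsplit e δe ε S

/-- Degree `d_v = Σ_{ε : v ∈ e_ε} f_ε({v})`. -/
def hdeg {V E : Type*} [Fintype E] [DecidableEq V] (e : E → Finset V) (δe : E → ℝ)
    (v : V) : ℝ :=
  ∑ ε ∈ univ.filter (fun ε => v ∈ e ε), hsplit e δe ε {v}

/-- Volume `vol(S) = Σ_{v∈S} d_v`. -/
def hvol {V E : Type*} [Fintype E] [DecidableEq V] (e : E → Finset V) (δe : E → ℝ)
    (S : Finset V) : ℝ :=
  ∑ v ∈ S, hdeg e δe v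

/-- Total volume `M = vol(V)`. -/
def hM {V E : Type*} [Fintype V] [Fintype E] [DecidableEq V] (e : E → Finset V)
    (δe : E → ℝ) : ℝ :=
  hvol e δe univ

/-- Hypergraph conductance `φ(S) = cut_H(S) / min(vol S, M − vol S)`. -/
def hcond {V E : Type*} [Fintype V] [Fintype E] [DecidableEq V] (e : E → Finset V)
    (δe : E → ℝ) (S : Finset V) : ℝ :=
  hcut e δe S / min (hvol e δe S) (hM e δe - hvol e δe S)

/-- Inner gadget objective of hyperedge `ε`:
`Σ_{v∈e_ε} ((x_v−a)₊² + (b−x_v)₊²) + δ_ε (a−b)₊²`. -/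
def innerQ {V E : Type*} [DecidableEq V] (e : E → Finset V) (δe : E → ℝ) (ε : E)
    (x : V → ℝ) (a b : ℝ) : ℝ :=
  ∑ v ∈ e ε, ((max (x v - a) 0) ^ 2 + (max (b - x v) 0) ^ 2)
    + δe ε * (max (a - b) 0) ^ 2

/-- `Q_ε(x) = min_{a,b∈ℝ} innerQ`. -/
def Qe {V E : Type*} [DecidableEq V] (e : E → Finset V) (δe : E → ℝ) (ε : E)
    (x : V → ℝ) : ℝ :=
  sInf {q : ℝ | ∃ a b : ℝ, q = innerQ e δe ε x a b}

/-- The diffusion objective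
`Q(x) = γ Σ_v d_v (x_v − 1_S(v)/vol S)² + Σ_ε Q_ε(x)` for a seed set `S`. -/
def Qobj {V E : Type*} [Fintype V] [Fintype E] [DecidableEq V] (e : E → Finset V)
    (δe : E → ℝ) (γ : ℝ) (S : Finset V) (x : V → ℝ) : ℝ :=
  γ * ∑ v : V, hdeg e δe v * (x v - (if v ∈ S then 1 else 0) / hvol e δe S) ^ 2
    + ∑ ε : E, Qe e δe ε x

end

open Finset in
/-- Cumulative volume of the first `j` vertices in the order `σ`. -/
noncomputable def cumVol {V : Type*} {n : ℕ} (σ : Fin n ≃ V) (d : V → ℝ) (j : ℕ) : ℝ :=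
  ∑ i ∈ univ.filter (fun i : Fin n => (i : ℕ) < j), d (σ i)

open Finset in
/-- The Lovász–Simonovits curve of `x` with respect to a (decreasingly sorted)
enumeration `σ`: the piecewise-linear function on `[0,M]` with `I_x(0) = 0`,
breakpoints `I_x(vol S_j) = Σ_{v∈S_j} d_v x_v`, and linear interpolation in between. -/
noncomputable def LScurve {V : Type*} {n : ℕ} (σ : Fin n ≃ V) (d x : V → ℝ)
    (k : ℝ) : ℝ :=
  ∑ i : Fin n,
    x (σ i) * (min k (cumVol σ d ((i : ℕ) + 1)) - min k (cumVol σ d (i : ℕ)))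

open Finset in
/-- The sweep set consisting of the first `j` vertices in the order `σ`. -/
def sweepSet {V : Type*} [DecidableEq V] {n : ℕ} (σ : Fin n ≃ V) (j : ℕ) : Finset V :=
  (univ.filter (fun i : Fin n => (i : ℕ) < j)).image σ

/-- The boundary of `T`: hyperedges cut by `T`. -/
def hbdry {V E : Type*} [DecidableEq V] (e : E → Finset V) (T : Finset V) : Set E :=
  {ε | (e ε ∩ T).Nonempty ∧ (e ε \ T).Nonempty}

/-- `δ̄(T) = max_{ε ∈ ∂T} min{δ_ε, |e_ε|/2}` (with value `0` if `∂T = ∅`). -/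
noncomputable def deltaBar {V E : Type*} [DecidableEq V] (e : E → Finset V)
    (δe : E → ℝ) (T : Finset V) : ℝ :=
  sSup ((fun ε => min (δe ε) (((e ε).card : ℝ) / 2)) '' hbdry e T)

/-!
For weights `0 ≤ w ≤ d` of total mass `k`, `∑ᵥ x_v w_v ≤ I_x(k)`: the curve integrates `x` against
the greedy allocation along the decreasing order of `x`, and `∑ᵢ xᵢ (cᵢ - wᵢ) ≥ 0` because `c - w`
has total `0` and is `≥ 0` before the breakpoint of `k` and `≤ 0` after it.

Let `S = S_j` and `m_ε = σ_j f_ε(S)`, which is `≤ 1` and vanishes unless `ε ∈ ∂S`. Starting from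
the weights `d · 1_S`, remove the mass `m_ε` at the vertex `u_ε` of `e ∩ S` with the least `x`,
resp. add it at the vertex `w_ε` of `e ∖ S` with the largest `x`, for every `ε`. Both weights are
admissible, of masses `vol S ∓ σ_j cut S`, so the right-hand side is at least
`2 I_x(vol S) - ∑_ε m_ε (x_{u_ε} - x_{w_ε})`.

It remains to bound `m_ε (x_{u_ε} - x_{w_ε})` by `∑_{v ∈ S ∩ e} L_e(x)_v` for a cut hyperedge. The
optimality of `(a, b)` gives `∑_{v∈e} (x_v - a)₊ = δ_e (a - b)₊ = ∑_{v∈e} (b - x_v)₊`, and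
`σ_j ≤ 1/3` gives `3 m_ε ≤ min(|e ∩ S|, |e ∖ S|, δ_e)`; splitting `x_{u_ε} - x_{w_ε}` at `a ≥ b`,
each piece is paid for by one of the sums above.
-/

lemma sq_max_sub_zero_le (p q : ℝ) :
    max (p - q) 0 ^ 2 ≤ max p 0 ^ 2 - 2 * q * max p 0 + q ^ 2 := by
  rcases le_total p 0 with h | h <;> rcases le_total (p - q) 0 with h' | h' <;>
    simp only [max_eq_left, max_eq_right, h, h'] <;> nlinarith

lemma eq_zero_of_forall_nonneg_mul_add_mul_sq {K C : ℝ} (h : ∀ t : ℝ, 0 ≤ t * K + C * t ^ 2) :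
    K = 0 := by
  have hmin : IsLocalMin (fun t : ℝ => t * K + C * t ^ 2) 0 :=
    Filter.Eventually.of_forall fun t => by simpa using h t
  have hderiv : HasDerivAt (fun t : ℝ => t * K + C * t ^ 2) K 0 := by
    simpa using ((hasDerivAt_id' (0 : ℝ)).mul_const K).fun_add
      (((hasDerivAt_id' (0 : ℝ)).fun_pow 2).const_mul C)
  exact hmin.hasDerivAt_eq_zero hderiv

section Gadget

variable {V E : Type*} [DecidableEq V] (e : E → Finset V) (δe : E → ℝ) (ε : E) (x : V → ℝ)

lemma innerQ_neg (a b : ℝ) : innerQ e δe ε (-x) a b = innerQ e δe ε x (-b) (-a) := by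
  unfold innerQ
  congr 1
  · refine sum_congr rfl fun v _ => ?_
    rw [add_comm]
    congr 3 <;> simp only [Pi.neg_apply] <;> ring
  · congr 3; ring

lemma innerQ_add_left_le (hδ : 0 ≤ δe ε) (a b t : ℝ) :
    innerQ e δe ε x (a + t) b ≤ innerQ e δe ε x a b
      + t * (2 * (δe ε * max (a - b) 0) - 2 * ∑ v ∈ e ε, max (x v - a) 0)
      + ((e ε).card + δe ε) * t ^ 2 := by
  have hsum : ∑ v ∈ e ε, max (x v - (a + t)) 0 ^ 2
      ≤ ∑ v ∈ e ε, (max (x v - a) 0 ^ 2 - 2 * t * max (x v - a) 0 + t ^ 2) :=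
    sum_le_sum fun v _ => by simpa only [sub_add_eq_sub_sub] using sq_max_sub_zero_le (x v - a) t
  have hpen : max (a + t - b) 0 ^ 2 ≤ max (a - b) 0 ^ 2 + 2 * t * max (a - b) 0 + t ^ 2 := by
    have := sq_max_sub_zero_le (a - b) (-t)
    rw [show a + t - b = a - b - -t by ring]; linarith
  simp only [sum_add_distrib, sum_sub_distrib, ← mul_sum, sum_const, nsmul_eq_mul] at hsum
  simp only [innerQ, sum_add_distrib]
  nlinarith [mul_le_mul_of_nonneg_left hpen hδ]

lemma sum_max_sub_left_eq_of_forall_innerQ_le (hδ : 0 ≤ δe ε) {a b : ℝ}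
    (hmin : ∀ a' b', innerQ e δe ε x a b ≤ innerQ e δe ε x a' b') :
    ∑ v ∈ e ε, max (x v - a) 0 = δe ε * max (a - b) 0 := by
  have := eq_zero_of_forall_nonneg_mul_add_mul_sq
    (K := 2 * (δe ε * max (a - b) 0) - 2 * ∑ v ∈ e ε, max (x v - a) 0)
    (C := (e ε).card + δe ε) fun t => by
      linarith [hmin (a + t) b, innerQ_add_left_le e δe ε x hδ a b t]
  linarith

lemma sum_max_sub_right_eq_of_forall_innerQ_le (hδ : 0 ≤ δe ε) {a b : ℝ}
    (hmin : ∀ a' b', innerQ e δe ε x a b ≤ innerQ e δe ε x a' b') :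
    ∑ v ∈ e ε, max (b - x v) 0 = δe ε * max (a - b) 0 := by
  have := sum_max_sub_left_eq_of_forall_innerQ_le e δe ε (-x) hδ (a := -b) (b := -a)
    fun a' b' => by simpa only [innerQ_neg, neg_neg] using hmin (-b') (-a')
  simpa only [Pi.neg_apply, neg_sub_neg] using this

end Gadget

lemma le_of_balanced {V : Type*} (s : Finset V) (x : V → ℝ) {a b δ : ℝ}
    (hpos : ∑ v ∈ s, max (x v - a) 0 = δ * max (a - b) 0)
    (hneg : ∑ v ∈ s, max (b - x v) 0 = δ * max (a - b) 0) (hs : s.Nonempty) : b ≤ a := by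
  obtain ⟨v, hv⟩ := hs
  have hPv : max (x v - a) 0 ≤ δ * max (a - b) 0 :=
    hpos ▸ single_le_sum (fun w _ => le_max_right (x w - a) 0) hv
  have hNv : max (b - x v) 0 ≤ δ * max (a - b) 0 :=
    hneg ▸ single_le_sum (fun w _ => le_max_right (b - x w) 0) hv
  by_contra! hab
  rw [max_eq_right (by linarith : a - b ≤ 0), mul_zero] at hPv hNv
  linarith [le_max_left (x v - a) 0, le_max_left (b - x v) 0]

lemma mul_sub_le_sum_inter_of_balanced {V : Type*} [DecidableEq V] (s T : Finset V) (x : V → ℝ)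
    {a b δ m α β : ℝ}
    (hpos : ∑ v ∈ s, max (x v - a) 0 = δ * max (a - b) 0)
    (hneg : ∑ v ∈ s, max (b - x v) 0 = δ * max (a - b) 0)
    (hA : (s ∩ T).Nonempty) (hα : ∀ v ∈ s ∩ T, α ≤ x v) (hβ : ∀ v ∈ s \ T, x v ≤ β)
    (hβα : β ≤ α) (hm : 0 ≤ m) (hmA : 3 * m ≤ #(s ∩ T)) (hmB : 3 * m ≤ #(s \ T))
    (hmδ : 3 * m ≤ δ) :
    m * (α - β) ≤ ∑ v ∈ T ∩ s, (max (x v - a) 0 - max (b - x v) 0) := by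
  have hba := le_of_balanced s x hpos hneg (hA.mono inter_subset_left)
  rw [inter_comm, sum_sub_distrib]
  rw [← sum_inter_add_sum_sdiff s T, max_eq_left (sub_nonneg.2 hba)] at hpos hneg
  set P := ∑ v ∈ s ∩ T, max (x v - a) 0
  set N := ∑ v ∈ s ∩ T, max (b - x v) 0
  set P' := ∑ v ∈ s \ T, max (x v - a) 0
  set N' := ∑ v ∈ s \ T, max (b - x v) 0
  have hP : #(s ∩ T) * max (α - a) 0 ≤ P := by
    simpa using card_nsmul_le_sum _ _ _ fun v hv =>
      max_le_max_right 0 (sub_le_sub_right (hα v hv) a)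
  have hN : N ≤ #(s ∩ T) * max (b - α) 0 := by
    simpa using sum_le_card_nsmul _ _ _ fun v hv =>
      max_le_max_right 0 (sub_le_sub_left (hα v hv) b)
  have hP' : P' ≤ #(s \ T) * max (β - a) 0 := by
    simpa using sum_le_card_nsmul _ _ _ fun v hv =>
      max_le_max_right 0 (sub_le_sub_right (hβ v hv) a)
  have hN' : #(s \ T) * max (b - β) 0 ≤ N' := by
    simpa using card_nsmul_le_sum _ _ _ fun v hv =>
      max_le_max_right 0 (sub_le_sub_left (hβ v hv) b)
  rcases le_or_gt b α with hbα | hαb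
  · rw [max_eq_right (sub_nonpos.2 hbα), mul_zero] at hN
    rcases le_or_gt β a with hβa | haβ
    · rw [max_eq_right (sub_nonpos.2 hβa), mul_zero] at hP'
      -- here `P - N = P = δ (a - b) = N'`, which pay for the three pieces of `α - β` cut at `a, b`
      have hsplit : α - β ≤ max (α - a) 0 + (a - b) + max (b - β) 0 := by
        linarith [le_max_left (α - a) 0, le_max_left (b - β) 0]
      nlinarith [mul_le_mul_of_nonneg_left hsplit hm,
        mul_le_mul_of_nonneg_right hmA (le_max_right (α - a) 0),
        mul_le_mul_of_nonneg_right hmB (le_max_right (b - β) 0),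
        mul_le_mul_of_nonneg_right hmδ (sub_nonneg.2 hba)]
    · rw [max_eq_left (by linarith : 0 ≤ α - a)] at hP
      nlinarith [mul_le_mul_of_nonneg_right hmA (by linarith : 0 ≤ α - a)]
  · rw [max_eq_right (by linarith : β - a ≤ 0), mul_zero] at hP'
    rw [max_eq_left (by linarith : 0 ≤ b - β)] at hN'
    nlinarith [mul_le_mul_of_nonneg_right hmB (by linarith : 0 ≤ b - β)]

lemma sum_mul_nonneg_of_sum_eq_zero {ι : Type*} (s : Finset ι) (x δ : ι → ℝ)
    (hδ : ∑ i ∈ s, δ i = 0) (hx : ∀ i ∈ s, ∀ j ∈ s, 0 < δ i → δ j < 0 → x j ≤ x i) :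
    0 ≤ ∑ i ∈ s, x i * δ i := by
  by_cases hpos : (s.filter (0 < δ ·)).Nonempty
  · obtain ⟨i₀, hi₀, hmin⟩ := exists_min_image _ x hpos
    rw [mem_filter] at hi₀
    -- `x i₀` separates the indices with `δ i > 0` from those with `δ i < 0`
    have hterm : ∀ i ∈ s, 0 ≤ (x i - x i₀) * δ i := fun i hi => by
      rcases lt_trichotomy (δ i) 0 with h | h | h
      · exact mul_nonneg_of_nonpos_of_nonpos (by linarith [hx i₀ hi₀.1 i hi hi₀.2 h]) h.le
      · simp [h]
      · exact mul_nonneg (by linarith [hmin i (mem_filter.2 ⟨hi, h⟩)]) h.le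
    have := sum_nonneg hterm
    simp only [sub_mul, sum_sub_distrib, ← mul_sum, hδ, mul_zero, sub_zero] at this
    exact this
  · have hle : ∀ i ∈ s, δ i ≤ 0 := fun i hi => by
      by_contra! h
      exact hpos ⟨i, mem_filter.2 ⟨hi, h⟩⟩
    rw [sum_eq_zero fun i hi => by rw [(sum_eq_zero_iff_of_nonpos hle).1 hδ i hi, mul_zero]]

section LScurve

variable {V : Type*} {n : ℕ} (σ : Fin n ≃ V)

lemma cumVol_zero (d : V → ℝ) : cumVol σ d 0 = 0 := by
  simp [cumVol]

lemma cumVol_succ (d : V → ℝ) (i : Fin n) :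
    cumVol σ d (i + 1) = cumVol σ d i + d (σ i) := by
  unfold cumVol
  rw [← sum_filter_add_sum_filter_not _ (fun k : Fin n => (k : ℕ) < i), filter_filter,
    filter_filter]
  congr 1
  · congr 1; ext k; simp only [mem_filter, mem_univ, true_and]; omega
  · rw [show univ.filter (fun k : Fin n => (k : ℕ) < i + 1 ∧ ¬(k : ℕ) < i) = {i} by
      ext k; simp only [mem_filter, mem_univ, true_and, mem_singleton, Fin.ext_iff]; omega]
    exact sum_singleton _ _

lemma cumVol_mono {d : V → ℝ} (hd : ∀ v, 0 ≤ d v) : Monotone (cumVol σ d) :=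
  fun _ _ h => sum_le_sum_of_subset_of_nonneg
    (fun k hk => by simp only [mem_filter, mem_univ, true_and] at hk ⊢; omega) fun _ _ _ => hd _

lemma cumVol_card [Fintype V] (d : V → ℝ) : cumVol σ d n = ∑ v, d v := by
  rw [← σ.sum_comp]
  exact sum_congr (filter_true_of_mem fun i _ => i.isLt) fun _ _ => rfl

lemma sum_sweepSet [DecidableEq V] (f : V → ℝ) (j : ℕ) :
    ∑ v ∈ sweepSet σ j, f v = cumVol σ f j :=
  sum_image fun _ _ _ _ h => σ.injective h

lemma le_of_mem_sweepSet [DecidableEq V] {x : V → ℝ}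
    (hx : ∀ i j, i ≤ j → x (σ j) ≤ x (σ i)) {j : ℕ} {v w : V}
    (hv : v ∈ sweepSet σ j) (hw : w ∉ sweepSet σ j) : x w ≤ x v := by
  obtain ⟨i, hi, rfl⟩ := mem_image.1 hv
  have hj : ¬((σ.symm w : ℕ) < j) := fun h =>
    hw (mem_image.2 ⟨σ.symm w, mem_filter.2 ⟨mem_univ _, h⟩, σ.apply_symm_apply w⟩)
  rw [mem_filter] at hi
  simpa using hx i (σ.symm w) (Fin.le_def.2 (by omega))

lemma LScurve_cumVol [DecidableEq V] {d : V → ℝ} (hd : ∀ v, 0 ≤ d v) (x : V → ℝ) (j : ℕ) :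
    LScurve σ d x (cumVol σ d j) = ∑ v ∈ sweepSet σ j, x v * d v := by
  rw [sum_sweepSet]
  change _ = ∑ i ∈ univ.filter (fun i : Fin n => (i : ℕ) < j), x (σ i) * d (σ i)
  rw [LScurve, ← sum_filter_add_sum_filter_not _ (fun i : Fin n => (i : ℕ) < j), ← add_zero
    (∑ i ∈ univ.filter (fun i : Fin n => (i : ℕ) < j), x (σ i) * d (σ i))]
  have hmono := cumVol_mono σ hd
  congr 1
  · refine sum_congr rfl fun i hi => ?_
    rw [mem_filter] at hi
    rw [min_eq_right (hmono (by omega)), min_eq_right (hmono (by omega)), cumVol_succ]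
    ring
  · have hzero : ∀ i ∈ univ.filter (fun i : Fin n => ¬(i : ℕ) < j),
        x (σ i) * (min (cumVol σ d j) (cumVol σ d (i + 1)) - min (cumVol σ d j) (cumVol σ d i))
          = 0 := fun i hi => by
      rw [mem_filter] at hi
      rw [min_eq_left (hmono (by omega)), min_eq_left (hmono (by omega)), sub_self, mul_zero]
    exact sum_eq_zero hzero

theorem sum_mul_le_LScurve [Fintype V] {d x w : V → ℝ}
    (hx : ∀ i j, i ≤ j → x (σ j) ≤ x (σ i)) (hw0 : ∀ v, 0 ≤ w v) (hwd : ∀ v, w v ≤ d v) :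
    ∑ v, x v * w v ≤ LScurve σ d x (∑ v, w v) := by
  set k := ∑ v, w v
  set C := cumVol σ d
  have hC : Monotone C := cumVol_mono σ fun v => (hw0 v).trans (hwd v)
  have hk0 : 0 ≤ k := sum_nonneg fun v _ => hw0 v
  have hkC : k ≤ C n := by
    simp only [C, cumVol_card]
    exact sum_le_sum fun v _ => hwd v
  -- `LScurve σ d x k = ∑ i, x (σ i) * c i`, `c` being the greedy allocation of `k` along `σ`
  set c : Fin n → ℝ := fun i => min k (C (i + 1)) - min k (C i)
  have hc : ∑ i, c i = k := by
    rw [Fin.sum_univ_eq_sum_range (fun i => min k (C (i + 1)) - min k (C i)),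
      sum_range_sub (fun i => min k (C i)), show C 0 = 0 from cumVol_zero σ d, min_eq_left hkC,
      min_eq_right hk0, sub_zero]
  have hlt_of_pos : ∀ i, 0 < c i - w (σ i) → C i < k := fun i h => by
    by_contra! hki
    have : c i = 0 := by
      simp only [c, min_eq_left hki, min_eq_left (hki.trans (hC (Nat.le_succ _))), sub_self]
    linarith [hw0 (σ i)]
  have hlt_of_neg : ∀ i, c i - w (σ i) < 0 → k < C (i + 1) := fun i h => by
    by_contra! hki
    have hsucc : C (i + 1) = C i + d (σ i) := cumVol_succ σ d i
    have : c i = d (σ i) := by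
      rw [show c i = min k (C (i + 1)) - min k (C i) from rfl, min_eq_right hki,
        min_eq_right ((hC (Nat.le_succ _)).trans hki), hsucc, add_sub_cancel_left]
    linarith [hwd (σ i)]
  have key : 0 ≤ ∑ i, x (σ i) * (c i - w (σ i)) := by
    refine sum_mul_nonneg_of_sum_eq_zero _ _ _ (by rw [sum_sub_distrib, hc, σ.sum_comp, sub_self])
      fun i _ j _ hi hj => hx _ _ (le_of_not_gt fun hji => ?_)
    have : C (j + 1) ≤ C i := hC (Nat.succ_le_of_lt hji)
    linarith [hlt_of_pos i hi, hlt_of_neg j hj]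
  rw [← σ.sum_comp]
  simp only [mul_sub, sum_sub_distrib] at key
  exact sub_nonneg.1 key

theorem two_mul_LScurve_cumVol_le [Fintype V] [DecidableEq V] {d x U W : V → ℝ}
    (hx : ∀ i j, i ≤ j → x (σ j) ≤ x (σ i)) {j : ℕ} {c : ℝ}
    (hU0 : ∀ v, 0 ≤ U v) (hUd : ∀ v, U v ≤ d v) (hUS : ∀ v ∉ sweepSet σ j, U v = 0)
    (hW0 : ∀ v, 0 ≤ W v) (hWd : ∀ v, W v ≤ d v) (hWS : ∀ v ∈ sweepSet σ j, W v = 0)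
    (hU : ∑ v, U v = c) (hW : ∑ v, W v = c) :
    2 * LScurve σ d x (cumVol σ d j) - ∑ v, x v * (U v - W v) ≤
      LScurve σ d x (cumVol σ d j - c) + LScurve σ d x (cumVol σ d j + c) := by
  set ind : V → ℝ := fun v => if v ∈ sweepSet σ j then d v else 0
  have hd : ∀ v, 0 ≤ d v := fun v => (hU0 v).trans (hUd v)
  have hind : ∀ f : V → ℝ, ∑ v, f v * ind v = ∑ v ∈ sweepSet σ j, f v * d v := fun f => by
    simp only [ind, mul_ite, mul_zero, sum_ite_mem, univ_inter]
  have hvol : ∑ v, ind v = cumVol σ d j := by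
    simpa only [one_mul, sum_sweepSet] using hind fun _ => 1
  have hminus := sum_mul_le_LScurve σ (d := d) (w := fun v => ind v - U v) hx
    (fun v => by by_cases hv : v ∈ sweepSet σ j <;> simp [ind, hv, hUS, hUd v])
    (fun v => by by_cases hv : v ∈ sweepSet σ j <;> simp [ind, hv, hUS, hU0 v, hd v])
  have hplus := sum_mul_le_LScurve σ (d := d) (w := fun v => ind v + W v) hx
    (fun v => by by_cases hv : v ∈ sweepSet σ j <;> simp [ind, hv, hWS, hW0 v, hd v])
    (fun v => by by_cases hv : v ∈ sweepSet σ j <;> simp [ind, hv, hWS, hWd v])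
  simp only [sum_sub_distrib, sum_add_distrib, mul_sub, mul_add, hind, hvol, hU, hW] at hminus hplus
  rw [LScurve_cumVol σ hd]
  simp only [mul_sub, sum_sub_distrib]
  linarith

end LScurve

section Hypergraph

variable {V E : Type*} [DecidableEq V] (e : E → Finset V) (δe : E → ℝ)

lemma hsplit_nonneg {ε : E} (hδ : 0 ≤ δe ε) (T : Finset V) : 0 ≤ hsplit e δe ε T :=
  le_min (le_min (Nat.cast_nonneg _) (Nat.cast_nonneg _)) hδ

lemma hsplit_singleton {ε : E} (hcard : 2 ≤ #(e ε)) (hδ : 1 ≤ δe ε) {v : V} (hv : v ∈ e ε) :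
    hsplit e δe ε {v} = 1 := by
  have hdiff : (1 : ℝ) ≤ #(e ε \ {v}) := by
    rw [card_sdiff_of_subset (singleton_subset_iff.2 hv), card_singleton]
    exact_mod_cast (by omega : 1 ≤ #(e ε) - 1)
  rw [hsplit, inter_singleton_of_mem hv, card_singleton, Nat.cast_one, min_eq_left hdiff,
    min_eq_left hδ]

lemma hsplit_eq_zero_of_notMem_hbdry {ε : E} (hδ : 0 ≤ δe ε) {T : Finset V}
    (h : ε ∉ hbdry e T) : hsplit e δe ε T = 0 := by
  refine le_antisymm ?_ (hsplit_nonneg e δe hδ T)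
  rcases not_and_or.1 h with h | h <;> rw [not_nonempty_iff_eq_empty] at h
  · exact (min_le_left _ _).trans (min_le_left _ _) |>.trans_eq (by simp [h])
  · exact (min_le_left _ _).trans (min_le_right _ _) |>.trans_eq (by simp [h])

lemma hsplit_le_min (ε : E) (T : Finset V) :
    hsplit e δe ε T ≤ min (δe ε) (#(e ε) / 2) := by
  have hcard : (#(e ε ∩ T) : ℝ) + #(e ε \ T) = #(e ε) := by
    exact_mod_cast card_inter_add_card_sdiff (e ε) T
  refine le_min (min_le_right _ _) ?_
  have h1 : hsplit e δe ε T ≤ #(e ε ∩ T) := (min_le_left _ _).trans (min_le_left _ _)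
  have h2 : hsplit e δe ε T ≤ #(e ε \ T) := (min_le_left _ _).trans (min_le_right _ _)
  linarith

lemma deltaBar_nonneg (hδ : ∀ ε, 0 ≤ δe ε) (T : Finset V) : 0 ≤ deltaBar e δe T :=
  Real.sSup_nonneg <| by
    rintro _ ⟨ε, -, rfl⟩
    exact le_min (hδ ε) (by positivity)

lemma le_deltaBar [Finite E] {T : Finset V} {ε : E} (h : ε ∈ hbdry e T) :
    min (δe ε) (#(e ε) / 2) ≤ deltaBar e δe T :=
  le_csSup (Set.toFinite _).bddAbove ⟨ε, h, rfl⟩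

lemma hsplit_le_deltaBar [Finite E] (hδ : ∀ ε, 0 ≤ δe ε) (ε : E) (T : Finset V) :
    hsplit e δe ε T ≤ deltaBar e δe T := by
  by_cases h : ε ∈ hbdry e T
  · exact (hsplit_le_min e δe ε T).trans (le_deltaBar e δe h)
  · rw [hsplit_eq_zero_of_notMem_hbdry e δe (hδ ε) h]
    exact deltaBar_nonneg e δe hδ T

lemma inv_one_add_two_deltaBar_mul_hsplit_le_one [Finite E] (hδ : ∀ ε, 0 ≤ δe ε) (ε : E)
    (T : Finset V) : (1 + 2 * deltaBar e δe T)⁻¹ * hsplit e δe ε T ≤ 1 := by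
  have h0 := deltaBar_nonneg e δe hδ T
  rw [inv_mul_le_one₀ (by linarith)]
  linarith [hsplit_le_deltaBar e δe hδ ε T]

lemma three_mul_inv_one_add_two_deltaBar_le_one [Finite E] {T : Finset V} {ε : E}
    (hcard : 2 ≤ #(e ε)) (hδ : 1 ≤ δe ε) (h : ε ∈ hbdry e T) :
    3 * (1 + 2 * deltaBar e δe T)⁻¹ ≤ 1 := by
  have hcard' : (2 : ℝ) ≤ #(e ε) := by exact_mod_cast hcard
  have h1 : 1 ≤ deltaBar e δe T := (le_min hδ (by linarith)).trans (le_deltaBar e δe h)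
  rw [← div_eq_mul_inv, div_le_one (by linarith)]
  linarith

lemma mul_sub_le_sum_inter_of_mem_hbdry [Finite E] {ε : E} (hcard : 2 ≤ #(e ε))
    (hδ : 1 ≤ δe ε) {x : V → ℝ} {a b : ℝ}
    (hab : ∀ a' b', innerQ e δe ε x a b ≤ innerQ e δe ε x a' b') {T : Finset V}
    (hε : ε ∈ hbdry e T) {α β : ℝ} (hα : ∀ v ∈ e ε ∩ T, α ≤ x v)
    (hβ : ∀ v ∈ e ε \ T, x v ≤ β) (hβα : β ≤ α) :
    (1 + 2 * deltaBar e δe T)⁻¹ * hsplit e δe ε T * (α - β) ≤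
      ∑ v ∈ T ∩ e ε, (max (x v - a) 0 - max (b - x v) 0) := by
  have hδ0 : 0 ≤ δe ε := zero_le_one.trans hδ
  have hf0 := hsplit_nonneg e δe hδ0 T
  have hD0 : 0 ≤ deltaBar e δe T := (le_min hδ0 (by positivity)).trans (le_deltaBar e δe hε)
  have h3 := three_mul_inv_one_add_two_deltaBar_le_one e δe hcard hδ hε
  have h3m : 3 * ((1 + 2 * deltaBar e δe T)⁻¹ * hsplit e δe ε T) ≤ hsplit e δe ε T := by
    nlinarith
  exact mul_sub_le_sum_inter_of_balanced (e ε) T x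
    (sum_max_sub_left_eq_of_forall_innerQ_le e δe ε x hδ0 hab)
    (sum_max_sub_right_eq_of_forall_innerQ_le e δe ε x hδ0 hab) hε.1 hα hβ hβα
    (mul_nonneg (inv_nonneg.2 (by linarith)) hf0)
    (h3m.trans ((min_le_left _ _).trans (min_le_left _ _)))
    (h3m.trans ((min_le_left _ _).trans (min_le_right _ _))) (h3m.trans (min_le_right _ _))

lemma sum_inter_eq_zero_of_notMem_hbdry {ε : E} (hδ : 0 ≤ δe ε) {x : V → ℝ} {a b : ℝ}
    (hab : ∀ a' b', innerQ e δe ε x a b ≤ innerQ e δe ε x a' b') {T : Finset V}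
    (hε : ε ∉ hbdry e T) : ∑ v ∈ T ∩ e ε, (max (x v - a) 0 - max (b - x v) 0) = 0 := by
  rcases not_and_or.1 hε with h | h <;> rw [not_nonempty_iff_eq_empty] at h
  · rw [inter_comm, h, sum_empty]
  · rw [inter_eq_right.2 (sdiff_eq_empty_iff_subset.1 h), sum_sub_distrib,
      sum_max_sub_left_eq_of_forall_innerQ_le e δe ε x hδ hab,
      sum_max_sub_right_eq_of_forall_innerQ_le e δe ε x hδ hab, sub_self]

lemma exists_argmin_inter_of_mem_hbdry (hne : ∀ ε, (e ε).Nonempty) (x : V → ℝ) (T : Finset V) :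
    ∃ u : E → V, ∀ ε, u ε ∈ e ε ∧ (ε ∈ hbdry e T → u ε ∈ T ∧ ∀ v ∈ e ε ∩ T, x (u ε) ≤ x v) := by
  have : ∀ ε, ∃ u ∈ e ε, ε ∈ hbdry e T → u ∈ T ∧ ∀ v ∈ e ε ∩ T, x u ≤ x v := fun ε => by
    by_cases h : ε ∈ hbdry e T
    · obtain ⟨u, hu, hmin⟩ := exists_min_image _ x h.1
      exact ⟨u, (mem_inter.1 hu).1, fun _ => ⟨(mem_inter.1 hu).2, hmin⟩⟩
    · obtain ⟨u, hu⟩ := hne ε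
      exact ⟨u, hu, fun h' => absurd h' h⟩
  choose u hu using this
  exact ⟨u, fun ε => ⟨(hu ε).1, (hu ε).2⟩⟩

variable [Fintype V]

lemma hbdry_compl (T : Finset V) : hbdry e Tᶜ = hbdry e T := by
  ext ε
  simp only [hbdry, Set.mem_ofPred_eq, ← sdiff_eq_inter_compl, sdiff_compl, inf_eq_inter]
  exact and_comm

lemma hsplit_compl (ε : E) (T : Finset V) : hsplit e δe ε Tᶜ = hsplit e δe ε T := by
  simp only [hsplit, ← sdiff_eq_inter_compl, sdiff_compl, inf_eq_inter, min_comm (#(e ε \ T) : ℝ)]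

lemma hvol_compl [Fintype E] (T : Finset V) : hvol e δe Tᶜ = hM e δe - hvol e δe T := by
  rw [hM, hvol, hvol, hvol, ← sum_compl_add_sum T, add_sub_cancel_right]

lemma hcut_compl [Fintype E] (T : Finset V) : hcut e δe Tᶜ = hcut e δe T := by
  simp only [hcut, hsplit_compl]

end Hypergraph

section Degrees

variable {V E : Type*} [Fintype E] [DecidableEq V] {e : E → Finset V} {δe : E → ℝ}

lemma hdeg_eq_card (hcard : ∀ ε, 2 ≤ #(e ε)) (hδe : ∀ ε, 1 ≤ δe ε)
    (v : V) : hdeg e δe v = #{ε | v ∈ e ε} := by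
  rw [hdeg, sum_congr rfl fun ε hε => hsplit_singleton e δe (hcard ε) (hδe ε) (mem_filter.1 hε).2]
  simp

lemma hvol_eq_sum_card_inter (hcard : ∀ ε, 2 ≤ #(e ε)) (hδe : ∀ ε, 1 ≤ δe ε)
    (T : Finset V) : hvol e δe T = ∑ ε, (#(e ε ∩ T) : ℝ) := by
  simp only [hvol, hdeg_eq_card hcard hδe, card_filter, Nat.cast_sum, Nat.cast_ite, Nat.cast_one,
    Nat.cast_zero]
  rw [sum_comm]
  refine sum_congr rfl fun ε _ => ?_
  rw [sum_ite_mem, inter_comm]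
  simp

lemma hcut_le_hvol (hcard : ∀ ε, 2 ≤ #(e ε)) (hδe : ∀ ε, 1 ≤ δe ε)
    (T : Finset V) : hcut e δe T ≤ hvol e δe T := by
  rw [hvol_eq_sum_card_inter hcard hδe]
  exact sum_le_sum fun ε _ => (min_le_left _ _).trans (min_le_left _ _)

lemma hvol_le_hM [Fintype V] (hcard : ∀ ε, 2 ≤ #(e ε)) (hδe : ∀ ε, 1 ≤ δe ε)
    (T : Finset V) : hvol e δe T ≤ hM e δe := by
  have := hvol_compl e δe T
  have : 0 ≤ hvol e δe Tᶜ := by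
    rw [hvol_eq_sum_card_inter hcard hδe]; positivity
  linarith

lemma hcut_le_hM_sub_hvol [Fintype V] (hcard : ∀ ε, 2 ≤ #(e ε)) (hδe : ∀ ε, 1 ≤ δe ε)
    (T : Finset V) : hcut e δe T ≤ hM e δe - hvol e δe T := by
  rw [← hvol_compl, ← hcut_compl]
  exact hcut_le_hvol hcard hδe Tᶜ

end Degrees

section FiberSum

variable {V E : Type*} [Fintype E] [DecidableEq V]

def fiberSum (u : E → V) (m : E → ℝ) (v : V) : ℝ :=
  ∑ ε with u ε = v, m ε

variable (u : E → V) {m : E → ℝ}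

lemma sum_fiberSum [Fintype V] (m : E → ℝ) : ∑ v, fiberSum u m v = ∑ ε, m ε :=
  sum_fiberwise univ u m

lemma sum_mul_fiberSum [Fintype V] (m : E → ℝ) (x : V → ℝ) :
    ∑ v, x v * fiberSum u m v = ∑ ε, m ε * x (u ε) := by
  simp only [fiberSum, mul_sum]
  rw [← sum_fiberwise univ u fun ε => m ε * x (u ε)]
  refine sum_congr rfl fun v _ => sum_congr rfl fun ε hε => ?_
  rw [(mem_filter.1 hε).2, mul_comm]

lemma fiberSum_nonneg (hm : ∀ ε, 0 ≤ m ε) (v : V) : 0 ≤ fiberSum u m v :=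
  sum_nonneg fun ε _ => hm ε

lemma fiberSum_eq_zero {v : V} (h : ∀ ε, u ε = v → m ε = 0) : fiberSum u m v = 0 :=
  sum_eq_zero fun ε hε => h ε (mem_filter.1 hε).2

lemma fiberSum_le_hdeg {e : E → Finset V} {δe : E → ℝ} (hcard : ∀ ε, 2 ≤ #(e ε))
    (hδe : ∀ ε, 1 ≤ δe ε) (hu : ∀ ε, u ε ∈ e ε) (hm : ∀ ε, m ε ≤ 1) (v : V) :
    fiberSum u m v ≤ hdeg e δe v := by
  rw [hdeg_eq_card hcard hδe]
  calc fiberSum u m v ≤ #{ε | u ε = v} := by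
        simpa [fiberSum] using sum_le_card_nsmul _ _ 1 fun ε _ => hm ε
    _ ≤ #{ε | v ∈ e ε} := by
        exact_mod_cast card_le_card fun ε hε => by
          rw [mem_filter] at hε ⊢
          exact ⟨hε.1, hε.2 ▸ hu ε⟩

end FiberSum

section Sweep

variable {V E : Type*} [Fintype V] [Fintype E] [DecidableEq V] {e : E → Finset V} {δe : E → ℝ}

lemma hvol_sub_add_mul_hcut_mem_Icc (hcard : ∀ ε, 2 ≤ #(e ε)) (hδe : ∀ ε, 1 ≤ δe ε)
    (T : Finset V) {s : ℝ} (hs0 : 0 ≤ s) (hs1 : s ≤ 1) :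
    hvol e δe T - s * hcut e δe T ∈ Set.Icc 0 (hM e δe) ∧
      hvol e δe T + s * hcut e δe T ∈ Set.Icc 0 (hM e δe) := by
  have hcut0 : 0 ≤ hcut e δe T :=
    sum_nonneg fun ε _ => hsplit_nonneg e δe (zero_le_one.trans (hδe ε)) T
  have hscut : s * hcut e δe T ≤ hcut e δe T := mul_le_of_le_one_left hcut0 hs1
  have := mul_nonneg hs0 hcut0
  have := hcut_le_hvol hcard hδe T
  have := hcut_le_hM_sub_hvol hcard hδe T
  have := hvol_le_hM hcard hδe T
  exact ⟨⟨by linarith, by linarith⟩, ⟨by linarith, by linarith⟩⟩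

theorem two_mul_LScurve_sweepSet_le (hcard : ∀ ε, 2 ≤ #(e ε)) (hδe : ∀ ε, 1 ≤ δe ε)
    {x : V → ℝ} {a b : E → ℝ}
    (hab : ∀ ε a' b', innerQ e δe ε x (a ε) (b ε) ≤ innerQ e δe ε x a' b')
    {n : ℕ} (σ : Fin n ≃ V) (hσ : ∀ i j, i ≤ j → x (σ j) ≤ x (σ i)) (j : ℕ) :
    2 * LScurve σ (hdeg e δe) x (hvol e δe (sweepSet σ j)) -
        ∑ ε, ∑ v ∈ sweepSet σ j ∩ e ε, (max (x v - a ε) 0 - max (b ε - x v) 0) ≤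
      LScurve σ (hdeg e δe) x (hvol e δe (sweepSet σ j) -
          (1 + 2 * deltaBar e δe (sweepSet σ j))⁻¹ * hcut e δe (sweepSet σ j)) +
        LScurve σ (hdeg e δe) x (hvol e δe (sweepSet σ j) +
          (1 + 2 * deltaBar e δe (sweepSet σ j))⁻¹ * hcut e δe (sweepSet σ j)) := by
  set S := sweepSet σ j
  set s := (1 + 2 * deltaBar e δe S)⁻¹
  have hδ0 : ∀ ε, 0 ≤ δe ε := fun ε => zero_le_one.trans (hδe ε)
  have hs0 : 0 ≤ s := inv_nonneg.2 (by linarith [deltaBar_nonneg e δe hδ0 S])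
  set m : E → ℝ := fun ε => s * hsplit e δe ε S
  have hm0 : ∀ ε, 0 ≤ m ε := fun ε => mul_nonneg hs0 (hsplit_nonneg e δe (hδ0 ε) S)
  have hm1 : ∀ ε, m ε ≤ 1 := fun ε => inv_one_add_two_deltaBar_mul_hsplit_le_one e δe hδ0 ε S
  have hbd : ∀ ε, m ε ≠ 0 → ε ∈ hbdry e S := fun ε h => by_contra fun hε =>
    h (by simp only [m, hsplit_eq_zero_of_notMem_hbdry e δe (hδ0 ε) hε, mul_zero])
  have hne : ∀ ε, (e ε).Nonempty := fun ε => card_pos.1 (by linarith [hcard ε])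
  obtain ⟨u, hu⟩ := exists_argmin_inter_of_mem_hbdry e hne x S
  obtain ⟨w, hw⟩ := exists_argmin_inter_of_mem_hbdry e hne (-x) Sᶜ
  simp only [hbdry_compl, ← sdiff_eq_inter_compl, mem_compl, Pi.neg_apply, neg_le_neg_iff] at hw
  have hedge : ∀ ε, m ε * (x (u ε) - x (w ε)) ≤
      ∑ v ∈ S ∩ e ε, (max (x v - a ε) 0 - max (b ε - x v) 0) := fun ε => by
    by_cases hε : ε ∈ hbdry e S
    · exact mul_sub_le_sum_inter_of_mem_hbdry e δe (hcard ε) (hδe ε) (hab ε) hε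
        ((hu ε).2 hε).2 ((hw ε).2 hε).2
        (le_of_mem_sweepSet σ hσ ((hu ε).2 hε).1 ((hw ε).2 hε).1)
    · rw [show m ε = 0 from not_not.1 (mt (hbd ε) hε), zero_mul,
        sum_inter_eq_zero_of_notMem_hbdry e δe (hδ0 ε) (hab ε) hε]
  have hmass : ∀ u : E → V, ∑ v, fiberSum u m v = s * hcut e δe S := fun u => by
    rw [sum_fiberSum, hcut, mul_sum]
  have hkey := two_mul_LScurve_cumVol_le σ hσ (U := fiberSum u m) (W := fiberSum w m)
    (fiberSum_nonneg u hm0) (fiberSum_le_hdeg u hcard hδe (fun ε => (hu ε).1) hm1)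
    (fun v hv => fiberSum_eq_zero u fun ε huv =>
      by_contra fun h => hv (huv ▸ ((hu ε).2 (hbd ε h)).1))
    (fiberSum_nonneg w hm0) (fiberSum_le_hdeg w hcard hδe (fun ε => (hw ε).1) hm1)
    (fun v hv => fiberSum_eq_zero w fun ε hwv =>
      by_contra fun h => ((hw ε).2 (hbd ε h)).1 (hwv ▸ hv))
    (hmass u) (hmass w)
  simp only [mul_sub, sum_sub_distrib, sum_mul_fiberSum] at hkey
  rw [show hvol e δe S = cumVol σ (hdeg e δe) j from sum_sweepSet σ _ j]
  have := sum_le_sum fun ε (_ : ε ∈ univ) => hedge ε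
  simp only [mul_sub, sum_sub_distrib] at this ⊢
  linarith

end Sweep

theorem ls_diffusion_lemma_general {V E : Type*} [Fintype V] [Fintype E] [DecidableEq V]
    (e : E → Finset V) (δe : E → ℝ)
    (hcard : ∀ ε, 2 ≤ (e ε).card) (hδe : ∀ ε, 1 ≤ δe ε)
    (x : V → ℝ)
    (a b : E → ℝ)
    (hab : ∀ ε : E, ∀ a' b' : ℝ, innerQ e δe ε x (a ε) (b ε) ≤ innerQ e δe ε x a' b')
    (σ : Fin (Fintype.card V) ≃ V)
    (hσ : ∀ i j : Fin (Fintype.card V), i ≤ j → x (σ j) ≤ x (σ i))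
    (j : ℕ) :
    hvol e δe (sweepSet σ j) -
        (1 + 2 * deltaBar e δe (sweepSet σ j))⁻¹ * hcut e δe (sweepSet σ j) ∈
      Set.Icc 0 (hM e δe) ∧
    hvol e δe (sweepSet σ j) +
        (1 + 2 * deltaBar e δe (sweepSet σ j))⁻¹ * hcut e δe (sweepSet σ j) ∈
      Set.Icc 0 (hM e δe) ∧
    2 * LScurve σ (hdeg e δe) x (hvol e δe (sweepSet σ j)) -
        ∑ ε : E, ∑ v ∈ sweepSet σ j ∩ e ε, (max (x v - a ε) 0 - max (b ε - x v) 0) ≤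
      LScurve σ (hdeg e δe) x
          (hvol e δe (sweepSet σ j) -
            (1 + 2 * deltaBar e δe (sweepSet σ j))⁻¹ * hcut e δe (sweepSet σ j)) +
        LScurve σ (hdeg e δe) x
          (hvol e δe (sweepSet σ j) +
            (1 + 2 * deltaBar e δe (sweepSet σ j))⁻¹ * hcut e δe (sweepSet σ j)) := by
  have hδ := deltaBar_nonneg e δe (fun ε => zero_le_one.trans (hδe ε)) (sweepSet σ j)
  obtain ⟨hminus, hplus⟩ := hvol_sub_add_mul_hcut_mem_Icc hcard hδe (sweepSet σ j)
    (s := (1 + 2 * deltaBar e δe (sweepSet σ j))⁻¹) (inv_nonneg.2 (by linarith))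
    (inv_le_one_of_one_le₀ (by linarith))
  exact ⟨hminus, hplus, two_mul_LScurve_sweepSet_le hcard hδe hab σ hσ j⟩

open Finset in
/-- Lovász–Simonovits diffusion lemma (Lemma `lm:diffusion`): for nonnegative `x` and
per-hyperedge optimal auxiliary values `(a_ε, b_ε)` of the inner gadget problem,
every sweep set `S_j` with `0 < vol(S_j) < M` satisfies, with
`σ_j = (1 + 2 δ̄(S_j))⁻¹` (so `σ_j = 1` when `∂S_j = ∅`), that
`vol(S_j) ± σ_j cut(S_j) ∈ [0,M]` and
`2 I_x(vol S_j) − Σ_ε Σ_{v∈S_j} L_ε(x)_v ≤ I_x(vol S_j − σ_j cut S_j) + I_x(vol S_j + σ_j cut S_j)`. -/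
theorem ls_diffusion_lemma {V E : Type*} [Fintype V] [Fintype E] [DecidableEq V]
    (e : E → Finset V) (δe : E → ℝ)
    (hcard : ∀ ε, 2 ≤ (e ε).card) (hδe : ∀ ε, 1 ≤ δe ε)
    (hcov : ∀ v : V, ∃ ε, v ∈ e ε)
    (x : V → ℝ) (hx0 : ∀ v, 0 ≤ x v)
    (a b : E → ℝ)
    (hab : ∀ ε : E, ∀ a' b' : ℝ, innerQ e δe ε x (a ε) (b ε) ≤ innerQ e δe ε x a' b')
    (σ : Fin (Fintype.card V) ≃ V)
    (hσ : ∀ i j : Fin (Fintype.card V), i ≤ j → x (σ j) ≤ x (σ i))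
    (j : ℕ) (hj : j ≤ Fintype.card V)
    (hj0 : 0 < hvol e δe (sweepSet σ j))
    (hjM : hvol e δe (sweepSet σ j) < hM e δe) :
    hvol e δe (sweepSet σ j) -
        (1 + 2 * deltaBar e δe (sweepSet σ j))⁻¹ * hcut e δe (sweepSet σ j) ∈
      Set.Icc 0 (hM e δe) ∧
    hvol e δe (sweepSet σ j) +
        (1 + 2 * deltaBar e δe (sweepSet σ j))⁻¹ * hcut e δe (sweepSet σ j) ∈
      Set.Icc 0 (hM e δe) ∧
    2 * LScurve σ (hdeg e δe) x (hvol e δe (sweepSet σ j)) -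
        ∑ ε : E, ∑ v ∈ sweepSet σ j ∩ e ε, (max (x v - a ε) 0 - max (b ε - x v) 0) ≤
      LScurve σ (hdeg e δe) x
          (hvol e δe (sweepSet σ j) -
            (1 + 2 * deltaBar e δe (sweepSet σ j))⁻¹ * hcut e δe (sweepSet σ j)) +
        LScurve σ (hdeg e δe) x
          (hvol e δe (sweepSet σ j) +
            (1 + 2 * deltaBar e δe (sweepSet σ j))⁻¹ * hcut e δe (sweepSet σ j)) :=
  ls_diffusion_lemma_general e δe hcard hδe x a b hab σ hσ j
end
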